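/- arXiv:2009.13214 — 3 statements merged into one kernel-verified Lean document; each statement's English description precedes it below -/
import Mathlib

section
/- The real function η(α) = α·log₂(1/α) + (1-α)·log₂(1/(1-α)) + β·log₂β - α·log₂α - (β-α)·log₂(β-α) + α·log₂ M, for fixed β > 0 and M > 1, attains its maximum on (0, min(1,β)] at α* = (M(β+1) - √(M²(β-1)² + 4Mβ))/(2(M-1)). -/
/-!
Up to the factor `log 2`, `η` has derivative `log (M (1 - α) (β - α) / α²)`, whose sign is that of
the quadratic `M (1 - α) (β - α) - α²`. On `[0, min 1 β]` this quadratic is strictly decreasing,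
equals `-(min 1 β)²` at the right end, and vanishes at its smaller root `α*`. Hence `η` increases up
to `α*` and decreases after it.
-/

open Real Set

theorem isMaxOn_Icc_of_hasDerivAt_sign_change {f f' : ℝ → ℝ} {l c r : ℝ} (hlc : l ≤ c)
    (hcr : c ≤ r) (hf : ContinuousOn f (Icc l r)) (hf' : ∀ x ∈ Ioo l r, HasDerivAt f (f' x) x)
    (hpos : ∀ x ∈ Ioo l c, 0 ≤ f' x) (hneg : ∀ x ∈ Ioo c r, f' x ≤ 0) :
    IsMaxOn f (Icc l r) c := by
  have hmono : MonotoneOn f (Icc l c) := by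
    refine monotoneOn_of_hasDerivWithinAt_nonneg (f' := f') (convex_Icc l c)
      (hf.mono (Icc_subset_Icc_right hcr)) (fun x hx => ?_) (fun x hx => ?_)
    · rw [interior_Icc] at hx
      exact (hf' x ⟨hx.1, hx.2.trans_le hcr⟩).hasDerivWithinAt
    · rw [interior_Icc] at hx
      exact hpos x hx
  have hanti : AntitoneOn f (Icc c r) := by
    refine antitoneOn_of_hasDerivWithinAt_nonpos (f' := f') (convex_Icc c r)
      (hf.mono (Icc_subset_Icc_left hlc)) (fun x hx => ?_) (fun x hx => ?_)
    · rw [interior_Icc] at hx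
      exact (hf' x ⟨hlc.trans_lt hx.1, hx.2⟩).hasDerivWithinAt
    · rw [interior_Icc] at hx
      exact hneg x hx
  intro x hx
  rcases le_total x c with h | h
  · exact hmono ⟨hx.1, h⟩ ⟨hlc, le_rfl⟩ h
  · exact hanti ⟨le_rfl, hcr⟩ ⟨h, hx.2⟩ h

noncomputable def icmMaximizer (β M : ℝ) : ℝ :=
  (M * (β + 1) - √(M ^ 2 * (β - 1) ^ 2 + 4 * M * β)) / (2 * (M - 1))

noncomputable def icmVertex (β M : ℝ) : ℝ := M * (β + 1) / (2 * (M - 1))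

def icmGap (β M x : ℝ) : ℝ := M * (1 - x) * (β - x) - x ^ 2

noncomputable def efficiencyNats (β M x : ℝ) : ℝ :=
  -2 * (x * log x) - (1 - x) * log (1 - x) - (β - x) * log (β - x) + β * log β + x * log M

section Quadratic

variable {β M : ℝ}

theorem strictAntiOn_icmGap (hM : 1 < M) :
    StrictAntiOn (icmGap β M) (Iic (icmVertex β M)) := by
  intro x _ y hy hxy
  have hy' : y * (2 * (M - 1)) ≤ M * (β + 1) := (le_div_iff₀ (by linarith)).1 hy
  -- `icmGap x - icmGap y = (y - x) (M (β + 1) - (M - 1) (x + y))`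
  have hsum : (M - 1) * (x + y) < M * (β + 1) := by nlinarith
  simp only [icmGap]
  nlinarith

theorem icmGap_icmMaximizer (hD : 0 ≤ M ^ 2 * (β - 1) ^ 2 + 4 * M * β) (hM : M ≠ 1) :
    icmGap β M (icmMaximizer β M) = 0 := by
  have hM1 : M - 1 ≠ 0 := sub_ne_zero.2 hM
  have hs := sq_sqrt hD
  simp only [icmGap, icmMaximizer]
  generalize √(M ^ 2 * (β - 1) ^ 2 + 4 * M * β) = s at hs ⊢
  field_simp
  linear_combination (M - 1) * hs

theorem icmMaximizer_le_icmVertex (hM : 1 < M) : icmMaximizer β M ≤ icmVertex β M :=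
  div_le_div_of_nonneg_right (sub_le_self _ (sqrt_nonneg _)) (by linarith)

theorem icmMaximizer_pos (hβ : 0 < β) (hM : 1 < M) : 0 < icmMaximizer β M := by
  have hMβ : 0 < M * β * (M - 1) := mul_pos (mul_pos (by linarith) hβ) (by linarith)
  refine div_pos (sub_pos.2 ((sqrt_lt' (by positivity)).2 ?_)) (by linarith)
  nlinarith

theorem min_one_le_icmVertex (hβ : 0 < β) (hM : 1 < M) : min 1 β ≤ icmVertex β M := by
  rw [icmVertex, le_div_iff₀ (by linarith)]
  have h1 := min_le_left 1 β
  have h2 := min_le_right 1 β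
  nlinarith

theorem icmGap_min_one : icmGap β M (min 1 β) = -min 1 β ^ 2 := by
  rcases min_choice 1 β with h | h <;> rw [h, icmGap] <;> ring

theorem icmMaximizer_lt_min (hβ : 0 < β) (hM : 1 < M) : icmMaximizer β M < min 1 β := by
  rw [← (strictAntiOn_icmGap hM).lt_iff_gt (min_one_le_icmVertex hβ hM)
    (icmMaximizer_le_icmVertex hM), icmGap_icmMaximizer (by positivity) hM.ne', icmGap_min_one]
  exact neg_neg_of_pos (pow_pos (lt_min one_pos hβ) 2)

theorem icmGap_pos_of_lt_icmMaximizer (hβ : 0 ≤ β) (hM : 1 < M) {x : ℝ}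
    (hx : x < icmMaximizer β M) : 0 < icmGap β M x := by
  rw [← icmGap_icmMaximizer (by positivity) hM.ne']
  exact strictAntiOn_icmGap hM (hx.le.trans (icmMaximizer_le_icmVertex hM))
    (icmMaximizer_le_icmVertex hM) hx

theorem icmGap_neg_of_icmMaximizer_lt (hβ : 0 < β) (hM : 1 < M) {x : ℝ}
    (hx : icmMaximizer β M < x) (hxm : x ≤ min 1 β) : icmGap β M x < 0 := by
  rw [← icmGap_icmMaximizer (by positivity) hM.ne']
  exact strictAntiOn_icmGap hM (icmMaximizer_le_icmVertex hM)
    (hxm.trans (min_one_le_icmVertex hβ hM)) hx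

end Quadratic

section Calculus

variable {β M : ℝ}

theorem continuous_efficiencyNats : Continuous (efficiencyNats β M) := by
  have h := continuous_mul_log
  have h1 : Continuous fun x : ℝ => (1 - x) * log (1 - x) := h.comp (by fun_prop)
  have h2 : Continuous fun x : ℝ => (β - x) * log (β - x) := h.comp (by fun_prop)
  unfold efficiencyNats
  fun_prop

theorem hasDerivAt_efficiencyNats (hM : 0 < M) {x : ℝ} (hx : 0 < x) (hx1 : x < 1)
    (hxβ : x < β) :
    HasDerivAt (efficiencyNats β M) (log (M * (1 - x) * (β - x)) - log (x ^ 2)) x := by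
  have d1 := hasDerivAt_mul_log hx.ne'
  have d2 : HasDerivAt (fun y => (1 - y) * log (1 - y)) ((log (1 - x) + 1) * (-1)) x := by
    simpa [Function.comp_def] using
      (hasDerivAt_mul_log (sub_pos.2 hx1).ne').comp x ((hasDerivAt_id x).const_sub 1)
  have dβ : HasDerivAt (fun y => (β - y) * log (β - y)) ((log (β - x) + 1) * (-1)) x := by
    simpa [Function.comp_def] using
      (hasDerivAt_mul_log (sub_pos.2 hxβ).ne').comp x ((hasDerivAt_id x).const_sub β)
  refine ((((d1.const_mul (-2)).sub d2).sub dβ).add_const (β * log β)).add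
    ((hasDerivAt_id x).mul_const (log M)) |>.congr_deriv ?_
  rw [log_mul (by positivity) (sub_pos.2 hxβ).ne', log_mul hM.ne' (sub_pos.2 hx1).ne', log_pow]
  ring

end Calculus

theorem isMaxOn_efficiencyNats {β M : ℝ} (hβ : 0 < β) (hM : 1 < M) :
    IsMaxOn (efficiencyNats β M) (Icc 0 (min 1 β)) (icmMaximizer β M) := by
  have hM0 : 0 < M := by linarith
  refine isMaxOn_Icc_of_hasDerivAt_sign_change (icmMaximizer_pos hβ hM).le
    (icmMaximizer_lt_min hβ hM).le continuous_efficiencyNats.continuousOn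
    (fun x hx => hasDerivAt_efficiencyNats hM0 hx.1 (lt_min_iff.1 hx.2).1 (lt_min_iff.1 hx.2).2)
    (fun x hx => ?_) (fun x hx => ?_)
  · have hgap := icmGap_pos_of_lt_icmMaximizer hβ.le hM hx.2
    rw [icmGap, sub_pos] at hgap
    exact sub_nonneg.2 (log_le_log (pow_pos hx.1 2) hgap.le)
  · obtain ⟨hx1, hxβ⟩ := lt_min_iff.1 hx.2
    have hgap := icmGap_neg_of_icmMaximizer_lt hβ hM hx.1 hx.2.le
    rw [icmGap, sub_neg] at hgap
    exact sub_nonpos.2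
      (log_le_log (mul_pos (mul_pos hM0 (sub_pos.2 hx1)) (sub_pos.2 hxβ)) hgap.le)

/-- The asymptotic spectral efficiency
`η(α) = α log₂(1/α) + (1-α) log₂(1/(1-α)) + β log₂ β - α log₂ α
        - (β-α) log₂(β-α) + α log₂ M`,
for fixed `β > 0` and `M > 1`, attains its maximum on `(0, min 1 β]` at
`α* = (M(β+1) - √(M²(β-1)² + 4Mβ))/(2(M-1))`. -/
theorem icm_se_maximizer (β M : ℝ) (hβ : 0 < β) (hM : 1 < M) :
    let η : ℝ → ℝ := fun α =>
      α * logb 2 (1 / α) + (1 - α) * logb 2 (1 / (1 - α))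
        + β * logb 2 β - α * logb 2 α - (β - α) * logb 2 (β - α)
        + α * logb 2 M
    let αstar : ℝ :=
      (M * (β + 1) - Real.sqrt (M ^ 2 * (β - 1) ^ 2 + 4 * M * β)) /
        (2 * (M - 1))
    αstar ∈ Set.Ioc 0 (min 1 β) ∧
      ∀ α ∈ Set.Ioc (0 : ℝ) (min 1 β), η α ≤ η αstar := by
  intro η αstar
  have hη : ∀ x, η x = efficiencyNats β M x / log 2 := fun x => by
    simp only [η, efficiencyNats, logb, one_div, log_inv]
    ring
  refine ⟨Ioo_subset_Ioc_self ⟨icmMaximizer_pos hβ hM, icmMaximizer_lt_min hβ hM⟩,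
    fun α hα => ?_⟩
  rw [hη, hη]
  exact div_le_div_of_nonneg_right (isMaxOn_efficiencyNats hβ hM (Ioc_subset_Icc_self hα))
    (log_nonneg one_le_two)
end

section
/- The root α* = (M(β+1) - √(M²(β-1)² + 4Mβ))/(2(M-1)) of the quadratic (M-1)α² - M(β+1)α + Mβ = 0 satisfies 0 < α* < min(1, β) for all reals M > 1 and β > 0. -/
/-! An upward parabola is negative exactly between its two roots. For
`p α = (M-1)α² - M(β+1)α + Mβ` we have `p 0 = Mβ > 0`, `p 1 = -1 < 0` and `p β = -β² < 0`,
and `0` lies left of the vertex, so the smaller root `α*` lies in `(0, 1)` and in `(0, β)`. -/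

section Factorization

variable {K : Type*} [Field K] [NeZero (2 : K)] {a b c s : K}

theorem quadratic_eq_mul_sub_mul_sub (ha : a ≠ 0) (h : discrim a b c = s * s) (x : K) :
    a * (x * x) + b * x + c = a * (x - (-b - s) / (2 * a)) * (x - (-b + s) / (2 * a)) := by
  have h2 : (2 : K) ≠ 0 := two_ne_zero
  rw [discrim] at h
  field_simp
  linear_combination -h

end Factorization

section SmallerRoot

/-- For `0 < a` and a nonnegative discriminant, the smaller real root of `a x² + b x + c`. -/
noncomputable def smallerRoot (a b c : ℝ) : ℝ := (-b - √(discrim a b c)) / (2 * a)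

variable {a b c : ℝ}

theorem quadratic_smallerRoot (ha : a ≠ 0) (hΔ : 0 ≤ discrim a b c) :
    a * (smallerRoot a b c * smallerRoot a b c) + b * smallerRoot a b c + c = 0 :=
  (quadratic_eq_zero_iff ha (Real.mul_self_sqrt hΔ).symm _).mpr (Or.inr rfl)

theorem quadratic_eq_mul_sub_smallerRoot (ha : a ≠ 0) (hΔ : 0 ≤ discrim a b c) (x : ℝ) :
    a * (x * x) + b * x + c =
      a * (x - smallerRoot a b c) * (x - (-b + √(discrim a b c)) / (2 * a)) :=
  quadratic_eq_mul_sub_mul_sub ha (Real.mul_self_sqrt hΔ).symm x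

theorem smallerRoot_lt_of_quadratic_neg (ha : 0 < a) (hΔ : 0 ≤ discrim a b c) {x : ℝ}
    (hx : a * (x * x) + b * x + c < 0) : smallerRoot a b c < x := by
  by_contra! hle
  have hroots : smallerRoot a b c ≤ (-b + √(discrim a b c)) / (2 * a) := by
    rw [smallerRoot]
    gcongr
    linarith [Real.sqrt_nonneg (discrim a b c)]
  rw [quadratic_eq_mul_sub_smallerRoot ha.ne' hΔ] at hx
  exact hx.not_ge <| mul_nonneg_of_nonpos_of_nonpos
    (mul_nonpos_of_nonneg_of_nonpos ha.le (by linarith)) (by linarith)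

theorem lt_smallerRoot_of_quadratic_pos (ha : 0 < a) (hΔ : 0 ≤ discrim a b c) {x : ℝ}
    (hx : 0 < a * (x * x) + b * x + c) (hvertex : 2 * a * x < -b) : x < smallerRoot a b c := by
  by_contra! hle
  have hx' : x < (-b + √(discrim a b c)) / (2 * a) := by
    rw [lt_div_iff₀ (by positivity)]
    linarith [Real.sqrt_nonneg (discrim a b c)]
  rw [quadratic_eq_mul_sub_smallerRoot ha.ne' hΔ] at hx
  exact hx.not_ge <| mul_nonpos_of_nonneg_of_nonpos
    (mul_nonneg ha.le (by linarith)) (by linarith)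

end SmallerRoot

/-- The root `α* = (M(β+1) - √(M²(β-1)² + 4Mβ))/(2(M-1))` of the quadratic
`(M-1)α² - M(β+1)α + Mβ = 0` satisfies `0 < α* < min 1 β` for all reals
`M > 1`, `β > 0`. -/
theorem icm_root_in_range (β M : ℝ) (hβ : 0 < β) (hM : 1 < M) :
    let αstar : ℝ :=
      (M * (β + 1) - Real.sqrt (M ^ 2 * (β - 1) ^ 2 + 4 * M * β)) /
        (2 * (M - 1))
    (M - 1) * αstar ^ 2 - M * (β + 1) * αstar + M * β = 0 ∧
      0 < αstar ∧ αstar < min 1 β := by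
  intro αstar
  have ha : 0 < M - 1 := sub_pos.mpr hM
  have hdisc : discrim (M - 1) (-(M * (β + 1))) (M * β) = M ^ 2 * (β - 1) ^ 2 + 4 * M * β := by
    rw [discrim]; ring
  have hΔ : 0 ≤ discrim (M - 1) (-(M * (β + 1))) (M * β) := by rw [hdisc]; positivity
  have hα : αstar = smallerRoot (M - 1) (-(M * (β + 1))) (M * β) := by
    rw [smallerRoot, hdisc, neg_neg]
  rw [hα]
  refine ⟨?_, lt_smallerRoot_of_quadratic_pos ha hΔ ?_ ?_,
    lt_min (smallerRoot_lt_of_quadratic_neg ha hΔ ?_) (smallerRoot_lt_of_quadratic_neg ha hΔ ?_)⟩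
  · linear_combination quadratic_smallerRoot ha.ne' hΔ
  · nlinarith
  · nlinarith
  · nlinarith
  · nlinarith
end

section
/- For fixed β ≥ 1 and M → ∞, the optimal α* = (M(β+1) - √(M²(β-1)² + 4Mβ))/(2(M-1)) converges to min(1, β) = 1; i.e., as the constellation size grows, it is optimal to activate all subcarriers. -/
open Real Filter Topology

lemma Filter.Tendsto.div_of_div_atTop {f g : ℝ → ℝ} {l m : ℝ}
    (hf : Tendsto (fun x => f x / x) atTop (𝓝 l))
    (hg : Tendsto (fun x => g x / x) atTop (𝓝 m)) (hm : m ≠ 0) :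
    Tendsto (fun x => f x / g x) atTop (𝓝 (l / m)) := by
  refine (hf.div hg hm).congr' ?_
  filter_upwards [eventually_ne_atTop 0] with x hx
  exact div_div_div_cancel_right₀ hx (f x) (g x)

lemma tendsto_sqrt_sq_mul_add_mul_div_atTop (a b : ℝ) :
    Tendsto (fun x : ℝ => √(x ^ 2 * a + x * b) / x) atTop (𝓝 √a) := by
  have hinner : Tendsto (fun x : ℝ => a + b / x) atTop (𝓝 a) := by
    simpa using tendsto_const_nhds.add ((tendsto_const_nhds (x := b)).div_atTop tendsto_id)
  refine (continuous_sqrt.tendsto a).comp hinner |>.congr' ?_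
  filter_upwards [eventually_gt_atTop 0] with x hx
  have hfactor : x ^ 2 * a + x * b = x ^ 2 * (a + b / x) := by field_simp
  rw [Function.comp_apply, hfactor, sqrt_mul (sq_nonneg x), sqrt_sq hx.le,
    mul_div_cancel_left₀ _ hx.ne']

/-- For fixed `β ≥ 1`, as `M → ∞` the optimal
`α* = (M(β+1) - √(M²(β-1)² + 4Mβ))/(2(M-1))` converges to `min 1 β = 1`:
as the constellation size grows, it is optimal to activate all subcarriers. -/
theorem icm_opt_alpha_limit (β : ℝ) (hβ : 1 ≤ β) :
    min (1 : ℝ) β = 1 ∧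
      Filter.Tendsto
        (fun M : ℝ =>
          (M * (β + 1) - Real.sqrt (M ^ 2 * (β - 1) ^ 2 + 4 * M * β)) /
            (2 * (M - 1)))
        Filter.atTop (nhds (min 1 β)) := by
  have hmin : min (1 : ℝ) β = 1 := min_eq_left hβ
  refine ⟨hmin, ?_⟩
  rw [hmin]
  have hsqrt : √((β - 1) ^ 2) = β - 1 := sqrt_sq (by linarith)
  have hnum : Tendsto (fun M : ℝ => (M * (β + 1) - √(M ^ 2 * (β - 1) ^ 2 + 4 * M * β)) / M)
      atTop (𝓝 2) := by
    have h := tendsto_const_nhds (x := β + 1).sub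
      (tendsto_sqrt_sq_mul_add_mul_div_atTop ((β - 1) ^ 2) (4 * β))
    rw [hsqrt, show β + 1 - (β - 1) = 2 by ring] at h
    refine h.congr' ?_
    filter_upwards [eventually_ne_atTop 0] with M hM
    rw [sub_div, mul_div_cancel_left₀ _ hM, mul_comm 4 M, mul_assoc]
  have hden : Tendsto (fun M : ℝ => 2 * (M - 1) / M) atTop (𝓝 2) := by
    have h := (tendsto_const_nhds (x := (1 : ℝ)).sub tendsto_inv_atTop_zero).const_mul 2
    rw [sub_zero, mul_one] at h
    refine h.congr' ?_
    filter_upwards [eventually_ne_atTop 0] with M hM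
    field_simp
  simpa using hnum.div_of_div_atTop hden two_ne_zero
end
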